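/- arXiv:1604.02471 — 2 statements merged into one kernel-verified Lean document; each statement's English description precedes it below -/
import Mathlib

section
/- Let n ≥ 1, let q be a positive integer, and let 𝓛 ⊆ ℤⁿ be a q-periodic subset. Then the following identity holds in ℤ[[z]]: (1−z^q)ⁿ · ϑ_𝓛(z) = Σ_{t=0}^{n} z^{tq} Σ_{ℓ=t}^{n} binom(ℓ, t) Φ_𝓛^{(ℓ)}(z). (This is Corollary 2.6 of the paper.) -/
/-!
Every `a ∈ ℤ` is reduced to its truncated remainder `a.tmod q`, which keeps the sign of `a` and has
absolute value `< q`; by `q`-periodicity this maps `𝓛` onto `C(q) ∩ 𝓛`. Above a reduced coordinate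
`a₀ ≠ 0` lie the integers `a₀ + sign(a₀) q m` (`m ≥ 0`), with series `z^|a₀| / (1 - z^q)`, and above
`0` lies `qℤ`, with series `(1 + z^q) / (1 - z^q)`. Hence
`(1 - z^q)ⁿ ϑ_𝓛 = ∑_{μ₀ ∈ C(q) ∩ 𝓛} z^‖μ₀‖ (1 + z^q)^Z(μ₀)`, and expanding `(1 + z^q)^ℓ` binomially
gives the formula.
-/

noncomputable section

open Finset PowerSeries

/-- Binomial coefficient `binom b a` with integer arguments,
zero when `a < 0` or `b < a`. -/
def ibinom (b a : ℤ) : ℤ := if a < 0 ∨ b < a then 0 else (b.toNat.choose a.toNat : ℤ)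

/-- One-norm `‖μ‖` of an integer vector. -/
def onenorm {n : ℕ} (μ : Fin n → ℤ) : ℕ := ∑ i, (μ i).natAbs

/-- `Z(μ)`: number of zero coordinates. -/
def zcount {n : ℕ} (μ : Fin n → ℤ) : ℕ := (univ.filter fun i => μ i = 0).card

/-- `N_𝓛(k, ℓ)`. -/
def Ncard {n : ℕ} (L : Set (Fin n → ℤ)) (k ℓ : ℕ) : ℕ :=
  {μ : Fin n → ℤ | μ ∈ L ∧ onenorm μ = k ∧ zcount μ = ℓ}.ncard

/-- `N_𝓛(k)`. -/
def NcardTot {n : ℕ} (L : Set (Fin n → ℤ)) (k : ℕ) : ℕ :=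
  {μ : Fin n → ℤ | μ ∈ L ∧ onenorm μ = k}.ncard

/-- `ϑ_𝓛^{(ℓ)}(z) = Σ_{k≥0} N_𝓛(k,ℓ) z^k`. -/
def thetaL {n : ℕ} (L : Set (Fin n → ℤ)) (ℓ : ℕ) : PowerSeries ℤ :=
  PowerSeries.mk fun k => (Ncard L k ℓ : ℤ)

/-- `ϑ_𝓛(z) = Σ_{k≥0} N_𝓛(k) z^k`. -/
def thetaTot {n : ℕ} (L : Set (Fin n → ℤ)) : PowerSeries ℤ :=
  PowerSeries.mk fun k => (NcardTot L k : ℤ)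

/-- `N_𝓛^red(k,ℓ)`, counting elements of `C(q) ∩ 𝓛`. -/
def NcardRed {n : ℕ} (L : Set (Fin n → ℤ)) (q k ℓ : ℕ) : ℕ :=
  {μ : Fin n → ℤ | (∀ i, |μ i| < (q : ℤ)) ∧ μ ∈ L ∧ onenorm μ = k ∧ zcount μ = ℓ}.ncard

/-- `Φ_𝓛^{(ℓ)}(z) = Σ_{k≥0} N_𝓛^red(k,ℓ) z^k`. -/
def PhiL {n : ℕ} (L : Set (Fin n → ℤ)) (q ℓ : ℕ) : PowerSeries ℤ :=
  PowerSeries.mk fun k => (NcardRed L q k ℓ : ℤ)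

/-- `𝓛` is `q`-periodic: `μ ∈ 𝓛 ↔ μ + qν ∈ 𝓛`. -/
def qPeriodic {n : ℕ} (q : ℕ) (L : Set (Fin n → ℤ)) : Prop :=
  ∀ μ ν : Fin n → ℤ, μ ∈ L ↔ (μ + (q : ℤ) • ν) ∈ L

/-- `M_𝓛(k,p)`. -/
def Mcoef {n : ℕ} (L : Set (Fin n → ℤ)) (k p : ℕ) : ℤ :=
  ∑ ℓ ∈ range (n+1), ∑ r ∈ range ((k-1+p)/2 + 1),
    (Ncard L (k-1+p-2*r) ℓ : ℤ) *
    ∑ j ∈ Icc 1 p, (-1 : ℤ)^(j-1) *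
      ∑ t ∈ range ((p-j)/2 + 1), ibinom ((n : ℤ) - p + j + 2*t) t *
        ∑ β ∈ range (p-j-2*t+1),
          2^(p-j-2*t-β) * ibinom ((n : ℤ) - ℓ) β * ibinom (ℓ : ℤ) ((p-j-2*t-β : ℕ)) *
          ∑ α ∈ range (β+1), ibinom (β : ℤ) α *
            ∑ i ∈ range j, ibinom ((r : ℤ) - i - p + j + α + t + n - 2) ((n : ℤ) - 2)

/-- `Ã_p^{(ℓ)}(z) = z^p A_p^{(ℓ)}(z)`. -/
def Atilde (n p ℓ : ℕ) : PowerSeries ℤ :=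
  ∑ j ∈ Icc 1 p, C ((-1 : ℤ)^(j-1)) *
    ∑ t ∈ range ((p-j)/2 + 1), C (ibinom ((n : ℤ) - p + j + 2*t) t) *
      ∑ β ∈ range (p-j-2*t+1),
        C (2^(p-j-2*t-β) * ibinom ((n : ℤ) - ℓ) β * ibinom (ℓ : ℤ) ((p-j-2*t-β : ℕ))) *
        ∑ α ∈ range (β+1), C (ibinom (β : ℤ) α) *
          ∑ i ∈ range j, (X : PowerSeries ℤ)^(2*p - 2*(j+t+α-i))

/-- `Υ_m^{(ℓ)}(z)`; zero when `m < 0`. -/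
def Upsilon {n : ℕ} (L : Set (Fin n → ℤ)) (m : ℤ) (ℓ : ℕ) : PowerSeries ℤ :=
  if m < 0 then 0 else
    ∑ h ∈ range (m.toNat + 1),
      C (∑ s ∈ range (h/2 + 1), (Ncard L (h - 2*s) ℓ : ℤ) * ((s + n - 2).choose (n-2) : ℤ)) *
        (X : PowerSeries ℤ)^h

/-- `B̃_{𝓛,p}^{(ℓ)}(z) = z^p B_{𝓛,p}^{(ℓ)}(z)`. -/
def Btilde {n : ℕ} (L : Set (Fin n → ℤ)) (p ℓ : ℕ) : PowerSeries ℤ :=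
  ∑ j ∈ Icc 1 p, C ((-1 : ℤ)^(j-1)) *
    ∑ t ∈ range ((p-j)/2 + 1), C (ibinom ((n : ℤ) - p + j + 2*t) t) *
      ∑ β ∈ range (p-j-2*t+1),
        C (2^(p-j-2*t-β) * ibinom ((n : ℤ) - ℓ) β * ibinom (ℓ : ℤ) ((p-j-2*t-β : ℕ))) *
        ∑ α ∈ range (β+1), C (ibinom (β : ℤ) α) *
          ∑ i ∈ range j,
            (X : PowerSeries ℤ)^(2*p - 2*(j+t+α-i)) *
              Upsilon L (2*((j : ℤ) + t + α - i) - p - 1) ℓ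

/-- `C_{p,g}^{(ℓ)}`. -/
def Cpg (n p g ℓ : ℕ) : ℤ :=
  ∑ j ∈ Icc 1 p, (-1 : ℤ)^(j-1) *
    ∑ t ∈ range ((p-j)/2 + 1), ibinom ((n : ℤ) - p + j + 2*t) t *
      ∑ β ∈ range (p-j-2*t+1),
        2^(p-j-2*t-β) * ibinom ((n : ℤ) - ℓ) β * ibinom (ℓ : ℤ) ((p-j-2*t-β : ℕ)) *
        ∑ i ∈ range j, ibinom (β : ℤ) ((p : ℤ) + i - j - t - g)


def oneNormSphere (n k : ℕ) : Finset (Fin n → ℤ) :=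
  (univ.finsuppAntidiag k).biUnion fun l => Fintype.piFinset fun i => {(l i : ℤ), -(l i : ℤ)}

lemma mem_pair_neg_iff_natAbs_eq {a : ℤ} {m : ℕ} :
    a ∈ ({(m : ℤ), -(m : ℤ)} : Finset ℤ) ↔ a.natAbs = m := by
  rw [Int.natAbs_eq_iff, mem_insert, mem_singleton]

lemma mem_oneNormSphere {n k : ℕ} {μ : Fin n → ℤ} : μ ∈ oneNormSphere n k ↔ onenorm μ = k := by
  simp only [oneNormSphere, mem_biUnion, Fintype.mem_piFinset, mem_pair_neg_iff_natAbs_eq,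
    mem_finsuppAntidiag, subset_univ, and_true]
  constructor
  · rintro ⟨l, rfl, hl⟩
    exact sum_congr rfl fun i _ => hl i
  · intro h
    exact ⟨Finsupp.equivFunOnFinite.symm fun i => (μ i).natAbs, h, fun i => rfl⟩

def absSeries (P : ℤ → Prop) [DecidablePred P] : PowerSeries ℤ :=
  mk fun m => #(({(m : ℤ), -(m : ℤ)} : Finset ℤ).filter P)

lemma coeff_prod_absSeries {n : ℕ} (P : Fin n → ℤ → Prop) [∀ i, DecidablePred (P i)] (k : ℕ) :
    coeff k (∏ i, absSeries (P i)) = #((oneNormSphere n k).filter fun μ => ∀ i, P i (μ i)) := by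
  have hfilter : (oneNormSphere n k).filter (fun μ => ∀ i, P i (μ i)) =
      (univ.finsuppAntidiag k).biUnion fun l =>
        Fintype.piFinset fun i => ({(l i : ℤ), -(l i : ℤ)} : Finset ℤ).filter (P i) := by
    ext μ
    simp only [oneNormSphere, mem_filter, mem_biUnion, Fintype.mem_piFinset]
    constructor
    · rintro ⟨⟨l, hl, hμ⟩, hP⟩
      exact ⟨l, hl, fun i => ⟨hμ i, hP i⟩⟩
    · rintro ⟨l, hl, hμ⟩
      exact ⟨⟨l, hl, fun i => (hμ i).1⟩, fun i => (hμ i).2⟩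
  have hdisj : ((univ : Finset (Fin n)).finsuppAntidiag k : Set (Fin n →₀ ℕ)).PairwiseDisjoint
      fun l => Fintype.piFinset fun i => ({(l i : ℤ), -(l i : ℤ)} : Finset ℤ).filter (P i) := by
    intro l _ l' _ hne
    refine disjoint_left.mpr fun μ hμ hμ' => hne (Finsupp.ext fun i => ?_)
    simp only [Fintype.mem_piFinset, mem_filter, mem_pair_neg_iff_natAbs_eq] at hμ hμ'
    rw [← (hμ i).1, (hμ' i).1]
  rw [coeff_prod, hfilter, card_biUnion hdisj, Nat.cast_sum]
  refine sum_congr rfl fun l _ => ?_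
  rw [Fintype.card_piFinset, Nat.cast_prod]
  simp only [absSeries, coeff_mk]

lemma coeff_sum_X_pow {R ι : Type*} [Semiring R] (s : Finset ι) (w : ι → ℕ) (k : ℕ) :
    coeff k (∑ x ∈ s, (X : PowerSeries R) ^ w x) = #(s.filter fun x => w x = k) := by
  simp only [map_sum, coeff_X_pow, sum_boole, eq_comm]

lemma sum_mul_one_add_pow {R : Type*} [CommSemiring R] (a : ℕ → R) (y : R) (n : ℕ) :
    ∑ ℓ ∈ range (n + 1), a ℓ * (1 + y) ^ ℓ =
      ∑ t ∈ range (n + 1), y ^ t * ∑ ℓ ∈ Icc t n, (ℓ.choose t : R) * a ℓ := by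
  simp only [add_comm (1 : R) y, add_pow, one_pow, mul_one, mul_sum]
  rw [sum_comm' (t' := range (n + 1)) (s' := fun t => Icc t n)]
  · exact sum_congr rfl fun t _ => sum_congr rfl fun ℓ _ => by ring
  · intro ℓ t
    simp only [mem_range, mem_Icc]
    omega

def residueSeries (q r : ℕ) : PowerSeries ℤ :=
  mk fun m => if m % q = r then 1 else 0

lemma one_sub_X_pow_mul_residueSeries {q r : ℕ} (hr : r < q) :
    (1 - X ^ q) * residueSeries q r = X ^ r := by
  ext m
  rw [sub_mul, one_mul, map_sub, coeff_X_pow_mul', coeff_X_pow, residueSeries, coeff_mk]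
  by_cases hm : q ≤ m
  · rw [if_pos hm, coeff_mk, ← Nat.mod_eq_sub_mod hm, sub_self, if_neg (by omega)]
  · rw [if_neg hm, sub_zero, Nat.mod_eq_of_lt (by omega)]

lemma absSeries_tmod_eq_zero (q : ℕ) :
    absSeries (fun a => a.tmod q = 0) = 2 • residueSeries q 0 - 1 := by
  ext m
  rw [map_sub, map_nsmul, coeff_one, absSeries, residueSeries, coeff_mk, coeff_mk]
  rcases eq_or_ne m 0 with rfl | hm
  · simp [filter_singleton, Int.zero_tmod]
  · rw [card_filter, sum_pair (by omega), Int.neg_tmod, ← Int.ofNat_tmod, nsmul_eq_mul]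
    split_ifs <;> omega

lemma absSeries_tmod_of_ne_zero {a₀ : ℤ} (ha₀ : a₀ ≠ 0) (q : ℕ) :
    absSeries (fun a => a.tmod q = a₀) = residueSeries q a₀.natAbs := by
  ext m
  rw [absSeries, residueSeries, coeff_mk, coeff_mk]
  rcases eq_or_ne m 0 with rfl | hm
  · simp [filter_singleton, Int.zero_tmod, ha₀.symm, eq_comm (a := 0), Int.natAbs_eq_zero, ha₀]
  · rw [card_filter, sum_pair (by omega), Int.neg_tmod, ← Int.ofNat_tmod]
    rcases Int.natAbs_eq a₀ with h | h <;> split_ifs <;> omega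

lemma one_sub_X_pow_mul_absSeries_tmod {q : ℕ} {a₀ : ℤ} (ha₀ : |a₀| < q) :
    (1 - X ^ q) * absSeries (fun a => a.tmod q = a₀) =
      (if a₀ = 0 then 1 + X ^ q else 1) * X ^ a₀.natAbs := by
  rw [Int.abs_eq_natAbs] at ha₀
  rcases eq_or_ne a₀ 0 with rfl | h
  · rw [absSeries_tmod_eq_zero, mul_sub, mul_smul_comm,
      one_sub_X_pow_mul_residueSeries (by omega), if_pos rfl]
    simp only [Int.natAbs_zero, pow_zero, mul_one, two_nsmul]
    ring
  · rw [absSeries_tmod_of_ne_zero h, one_sub_X_pow_mul_residueSeries (by omega), if_neg h, one_mul]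

lemma one_sub_X_pow_pow_mul_prod_absSeries_tmod {n q : ℕ} {μ₀ : Fin n → ℤ}
    (hμ₀ : ∀ i, |μ₀ i| < q) :
    (1 - X ^ q) ^ n * ∏ i, absSeries (fun a => a.tmod q = μ₀ i) =
      X ^ onenorm μ₀ * (1 + X ^ q) ^ zcount μ₀ := by
  have hpow : (1 - X ^ q : PowerSeries ℤ) ^ n = ∏ _i : Fin n, (1 - X ^ q) := by simp
  rw [hpow, ← prod_mul_distrib,
    prod_congr rfl fun i _ => one_sub_X_pow_mul_absSeries_tmod (hμ₀ i), prod_mul_distrib,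
    prod_ite, prod_const, prod_const_one, mul_one, prod_pow_eq_pow_sum, mul_comm, onenorm, zcount]

lemma qPeriodic.tmod_mem_iff {n q : ℕ} {L : Set (Fin n → ℤ)} (hL : qPeriodic q L)
    (μ : Fin n → ℤ) : (fun i => (μ i).tmod q) ∈ L ↔ μ ∈ L := by
  have hμ : (fun i => (μ i).tmod q) + (q : ℤ) • (fun i => (μ i).tdiv q) = μ := by
    funext i
    simp only [Pi.add_apply, Pi.smul_apply, smul_eq_mul, Int.tmod_def]
    ring
  rw [hL _ (fun i => (μ i).tdiv q), hμ]

open Classical in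
def reducedSet {n : ℕ} (q : ℕ) (L : Set (Fin n → ℤ)) : Finset (Fin n → ℤ) :=
  (Fintype.piFinset fun _ => Ioo (-(q : ℤ)) q).filter (· ∈ L)

lemma mem_reducedSet {n q : ℕ} {L : Set (Fin n → ℤ)} {μ : Fin n → ℤ} :
    μ ∈ reducedSet q L ↔ (∀ i, |μ i| < q) ∧ μ ∈ L := by
  simp only [reducedSet, mem_filter, Fintype.mem_piFinset, mem_Ioo, abs_lt]

lemma thetaTot_eq_sum_prod_absSeries {n q : ℕ} (hq : 0 < q) {L : Set (Fin n → ℤ)}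
    (hL : qPeriodic q L) :
    thetaTot L = ∑ μ₀ ∈ reducedSet q L, ∏ i, absSeries (fun a => a.tmod q = μ₀ i) := by
  classical
  ext k
  have hcard : NcardTot L k = #((oneNormSphere n k).filter (· ∈ L)) := by
    rw [NcardTot, ← Set.ncard_coe_finset]
    congr 1
    ext μ
    simp [mem_oneNormSphere, and_comm]
  have hmaps : Set.MapsTo (fun (μ : Fin n → ℤ) i => (μ i).tmod q)
      ((oneNormSphere n k).filter (· ∈ L) : Set (Fin n → ℤ))
      (reducedSet q L : Set (Fin n → ℤ)) := by
    intro μ hμ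
    refine mem_reducedSet.mpr ⟨fun i => ?_, (hL.tmod_mem_iff μ).mpr (mem_filter.mp hμ).2⟩
    rw [Int.abs_eq_natAbs, Int.natAbs_tmod]
    exact_mod_cast Nat.mod_lt _ hq
  rw [thetaTot, coeff_mk, hcard, card_eq_sum_card_fiberwise hmaps, map_sum, Nat.cast_sum]
  refine sum_congr rfl fun μ₀ hμ₀ => ?_
  rw [coeff_prod_absSeries, filter_filter]
  congr 2
  ext μ
  simp only [mem_filter, funext_iff]
  constructor
  · exact fun ⟨hμ, _, h⟩ => ⟨hμ, h⟩
  · intro ⟨hμ, h⟩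
    refine ⟨hμ, (hL.tmod_mem_iff μ).mp ?_, h⟩
    rw [show (fun i => (μ i).tmod q) = μ₀ from funext h]
    exact (mem_reducedSet.mp hμ₀).2

lemma PhiL_eq_sum_X_pow {n : ℕ} (q : ℕ) (L : Set (Fin n → ℤ)) (ℓ : ℕ) :
    PhiL L q ℓ = ∑ μ₀ ∈ (reducedSet q L).filter (zcount · = ℓ), X ^ onenorm μ₀ := by
  ext k
  rw [PhiL, coeff_mk, coeff_sum_X_pow, NcardRed, ← Set.ncard_coe_finset]
  congr 2
  ext μ
  simp only [coe_filter, mem_filter, mem_reducedSet, Set.mem_ofPred_eq]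
  tauto

theorem stmt4_general {n : ℕ} {q : ℕ} (hq : 0 < q) (L : Set (Fin n → ℤ))
    (hL : qPeriodic q L) :
    (1 - (X : PowerSeries ℤ)^q)^n * thetaTot L =
      ∑ t ∈ range (n+1), (X : PowerSeries ℤ)^(t*q) *
        ∑ ℓ ∈ Icc t n, C ((ℓ.choose t : ℤ)) * PhiL L q ℓ := by
  have hzcount : ∀ μ₀ ∈ reducedSet q L, zcount μ₀ ∈ range (n + 1) := fun μ₀ _ =>
    mem_range_succ_iff.mpr ((card_filter_le _ _).trans (card_fin n).le)
  calc (1 - X ^ q) ^ n * thetaTot L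
      = ∑ μ₀ ∈ reducedSet q L, X ^ onenorm μ₀ * (1 + X ^ q) ^ zcount μ₀ := by
        rw [thetaTot_eq_sum_prod_absSeries hq hL, mul_sum]
        exact sum_congr rfl fun μ₀ hμ₀ =>
          one_sub_X_pow_pow_mul_prod_absSeries_tmod (mem_reducedSet.mp hμ₀).1
    _ = ∑ ℓ ∈ range (n + 1), PhiL L q ℓ * (1 + X ^ q) ^ ℓ := by
        rw [← sum_fiberwise_of_maps_to hzcount]
        refine sum_congr rfl fun ℓ _ => ?_
        rw [PhiL_eq_sum_X_pow, sum_mul]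
        exact sum_congr rfl fun μ₀ hμ₀ => by rw [(mem_filter.mp hμ₀).2]
    _ = _ := by
        simp only [sum_mul_one_add_pow, map_natCast, ← pow_mul, mul_comm q]

/-- Corollary 2.6:
`(1-z^q)^n · ϑ_𝓛(z) = Σ_{t=0}^{n} z^{tq} Σ_{ℓ=t}^{n} binom(ℓ,t) Φ_𝓛^{(ℓ)}(z)`. -/
theorem stmt4 {n : ℕ} (hn : 1 ≤ n) {q : ℕ} (hq : 0 < q) (L : Set (Fin n → ℤ))
    (hL : qPeriodic q L) :
    (1 - (X : PowerSeries ℤ)^q)^n * thetaTot L =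
      ∑ t ∈ range (n+1), (X : PowerSeries ℤ)^(t*q) *
        ∑ ℓ ∈ Icc t n, C ((ℓ.choose t : ℤ)) * PhiL L q ℓ :=
  stmt4_general hq L hL
end
end

section
/- Let n ≥ 2, 1 ≤ p ≤ n, and let g be an integer with 0 ≤ g ≤ (p−1)/2. Then C_{p,g}^{(n)} = (−1)^{p−1+g} binom(n−1, g). (This is part of Claim 3.8 in the proof of Theorem 2.2.) -/
noncomputable section

open Finset PowerSeries

/-! For `ℓ = n` the factor `binom(n - ℓ, β)` kills every `β ≠ 0`, and the sum over `i` then only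
records whether `s + t ≤ g`, where `s = p - j - 2t`; since `2g < p`, every such pair `(s, t)`
comes from some `j ≥ 1`. Grouping by `k = s + t`, the identity
`binom(n, s) binom(n - s, k - s) = binom(n, k) binom(k, s)` and the binomial theorem collapse the
inner sum to `(-1)^k binom(n, k)`, and the partial alternating sum
`∑_{k ≤ g} (-1)^k binom(n, k)` equals `(-1)^g binom(n - 1, g)`. -/

lemma ibinom_natCast (b a : ℕ) : ibinom b a = b.choose a := by
  unfold ibinom
  split_ifs with h
  · rw [Nat.choose_eq_zero_of_lt (by omega), Nat.cast_zero]
  · simp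

lemma ibinom_zero_left (a : ℤ) : ibinom 0 a = if a = 0 then 1 else 0 := by
  unfold ibinom
  split_ifs <;> first | rfl | omega | simp_all

lemma sum_range_ibinom_zero_left (j : ℕ) (c : ℤ) :
    ∑ i ∈ range j, ibinom 0 (i - c) = if 0 ≤ c ∧ c < j then 1 else 0 := by
  simp only [ibinom_zero_left]
  split_ifs with hc
  · rw [sum_eq_single_of_mem c.toNat (mem_range.mpr (by omega)) (fun i _ hi => if_neg (by omega)),
      if_pos (by omega)]
  · exact sum_eq_zero fun i hi => if_neg (by simp only [mem_range] at hi; omega)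

lemma sum_range_neg_two_pow_mul_choose_mul_choose (n k : ℕ) :
    ∑ s ∈ range (k + 1), (-2 : ℤ) ^ s * n.choose s * (n - s).choose (k - s) =
      (-1) ^ k * n.choose k := by
  have hrow : ∑ s ∈ range (k + 1), (-2 : ℤ) ^ s * k.choose s = (-1) ^ k := by
    simpa using (add_pow (-2 : ℤ) 1 k).symm
  calc ∑ s ∈ range (k + 1), (-2 : ℤ) ^ s * n.choose s * (n - s).choose (k - s)
      = n.choose k * ∑ s ∈ range (k + 1), (-2 : ℤ) ^ s * k.choose s := by
        rw [mul_sum]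
        refine sum_congr rfl fun s hs => ?_
        have := Nat.choose_mul (n := n) (Nat.lt_succ_iff.mp (mem_range.mp hs))
        rw [mul_assoc, ← Nat.cast_mul, ← this, Nat.cast_mul]
        ring
    _ = (-1) ^ k * n.choose k := by rw [hrow, mul_comm]

lemma sum_range_neg_one_pow_mul_choose {n : ℕ} (hn : n ≠ 0) (g : ℕ) :
    ∑ k ∈ range (g + 1), (-1 : ℤ) ^ k * n.choose k = (-1) ^ g * (n - 1).choose g := by
  obtain ⟨m, rfl⟩ := Nat.exists_eq_succ_of_ne_zero hn
  exact Int.alternating_sum_range_choose_eq_choose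

lemma sum_Icc_sum_range_ite_eq_sum_range_sum_range {p g : ℕ} (hg : 2 * g < p)
    (F : ℕ → ℕ → ℤ) :
    ∑ j ∈ Icc 1 p, ∑ t ∈ range ((p - j) / 2 + 1),
        (if p - j - 2 * t + t ≤ g then F (p - j - 2 * t) t else 0) =
      ∑ k ∈ range (g + 1), ∑ s ∈ range (k + 1), F s (k - s) := by
  rw [sum_sigma', sum_sigma']
  refine sum_bij_ne_zero (fun x _ _ => ⟨p - x.1 - x.2, p - x.1 - 2 * x.2⟩) ?_ ?_ ?_ ?_
  · rintro ⟨j, t⟩ hx hne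
    simp only [mem_sigma, mem_Icc, mem_range] at hx ⊢
    dsimp only at hne
    split_ifs at hne
    · omega
    · exact absurd rfl hne
  · rintro ⟨j, t⟩ hx hne ⟨j', t'⟩ hx' hne' heq
    simp only [mem_sigma, mem_Icc, mem_range] at hx hx'
    simp only [Sigma.mk.injEq, heq_eq_eq] at heq ⊢
    omega
  · rintro ⟨k, s⟩ hx hne
    simp only [mem_sigma, mem_range] at hx
    refine ⟨⟨p - 2 * k + s, k - s⟩, ?_, ?_, ?_⟩
    · simp only [mem_sigma, mem_Icc, mem_range]
      omega
    · dsimp only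
      rwa [if_pos (by omega), show p - (p - 2 * k + s) - 2 * (k - s) = s by omega]
    · simp only [Sigma.mk.injEq, heq_eq_eq]
      omega
  · rintro ⟨j, t⟩ hx hne
    simp only [mem_sigma, mem_Icc, mem_range] at hx
    dsimp only at hne ⊢
    split_ifs at hne with h
    · rw [if_pos h, show p - j - t - (p - j - 2 * t) = t by omega]
    · exact absurd rfl hne

lemma Cpg_self_eq_sum {n p g : ℕ} (hpn : p ≤ n) (hg : 2 * g < p) :
    Cpg n p g n = ∑ j ∈ Icc 1 p, ∑ t ∈ range ((p - j) / 2 + 1),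
      (if p - j - 2 * t + t ≤ g then
        (-1) ^ (p - 1) * ((-2 : ℤ) ^ (p - j - 2 * t) * n.choose (p - j - 2 * t) *
          (n - (p - j - 2 * t)).choose t)
      else 0) := by
  unfold Cpg
  refine sum_congr rfl fun j hj => ?_
  rw [mul_sum]
  refine sum_congr rfl fun t ht => ?_
  simp only [mem_Icc, mem_range] at hj ht
  set s := p - j - 2 * t
  have hβ : ∑ β ∈ range (s + 1), 2 ^ (s - β) * ibinom ((n : ℤ) - (n : ℕ)) β *
      ibinom (n : ℕ) ((s - β : ℕ)) * ∑ i ∈ range j, ibinom β ((p : ℤ) + i - j - t - g) =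
      2 ^ s * n.choose s * (if s + t ≤ g then 1 else 0) := by
    rw [sum_eq_single_of_mem 0 (by simp) fun β _ hβ => by
      rw [sub_self, ibinom_zero_left, if_neg (by exact_mod_cast hβ)]; ring]
    have hshift (i : ℕ) : (p : ℤ) + i - j - t - g = i - (j + t + g - p) := by ring
    simp only [Nat.sub_zero, Nat.cast_zero, hshift, sum_range_ibinom_zero_left, ibinom_natCast]
    rw [sub_self, ibinom_zero_left, if_pos rfl, mul_one]
    congr 1
    exact if_congr (by omega) rfl rfl
  have htop : (n : ℤ) - p + j + 2 * t = ((n - s : ℕ) : ℤ) := by omega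
  rw [hβ, htop, ibinom_natCast]
  split_ifs with h
  · have hsign : (-1 : ℤ) ^ (j - 1) * 2 ^ s = (-1) ^ (p - 1) * (-2) ^ s := by
      have hsq : ((-1 : ℤ) ^ s) ^ 2 = 1 := by rw [← pow_mul, mul_comm, pow_mul]; norm_num
      rw [show p - 1 = j - 1 + s + 2 * t by omega, pow_add, pow_add, pow_mul, neg_pow (2 : ℤ)]
      linear_combination (-(-1 : ℤ) ^ (j - 1) * 2 ^ s) * hsq
    linear_combination (n.choose s * (n - s).choose t : ℤ) * hsign
  · ring

theorem stmt9_general {n p g : ℕ} (hpn : p ≤ n)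
    (hg : 2*g + 1 ≤ p) :
    Cpg n p g n = (-1 : ℤ)^(p-1+g) * ((n-1).choose g : ℤ) := by
  have hgp : 2 * g < p := hg
  rw [Cpg_self_eq_sum hpn hgp, sum_Icc_sum_range_ite_eq_sum_range_sum_range hgp
    (fun s t => (-1) ^ (p - 1) * ((-2 : ℤ) ^ s * n.choose s * (n - s).choose t))]
  simp only [← mul_sum, sum_range_neg_two_pow_mul_choose_mul_choose]
  rw [sum_range_neg_one_pow_mul_choose (by omega), pow_add, mul_assoc]

/-- part of Claim 3.8: `C_{p,g}^{(n)} = (-1)^{p-1+g} binom(n-1, g)`. -/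
theorem stmt9 {n p g : ℕ} (hn : 2 ≤ n) (hp1 : 1 ≤ p) (hpn : p ≤ n)
    (hg : 2*g + 1 ≤ p) :
    Cpg n p g n = (-1 : ℤ)^(p-1+g) * ((n-1).choose g : ℤ) :=
  stmt9_general hpn hg
end
end
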